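/- The matrix exponential restricts to a bijection from the open ball {θ ∈ su(2) : |θ| < π√2} onto SU(2) \ {-I}. -/

import Mathlib

open Matrix

/-- The norm on `su(2)`: `|θ| = √(-Tr(θ²))`. -/
noncomputable def su2Norm (θ : Matrix (Fin 2) (Fin 2) ℂ) : ℝ :=
  Real.sqrt (-(θ * θ).trace.re)

/-!
Every `θ ∈ su(2)` satisfies `θ² = -r² • 1` with `|θ| = √2 r`, so the exponential series splits
into `exp θ = cos r • 1 + sinc r • θ`. Conversely, Cayley–Hamilton writes every `A ∈ SU(2)` as
`c • 1 + θ₀` with `c` real and `θ₀ ∈ su(2)`, `θ₀² = (c² - 1) • 1`. On the ball `r < π` the trace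
`2 cos r` of `exp θ` determines `r`, then `sinc r > 0` determines `θ`; and `r = arccos c` with
`θ = θ₀ / sinc r` inverts the map as long as `c ≠ -1`, i.e. `A ≠ -1`.
-/

open scoped Nat Real ComplexOrder

namespace Real

theorem mul_sinc (r : ℝ) : r * sinc r = sin r := by
  rcases eq_or_ne r 0 with rfl | hr
  · simp
  · rw [sinc_of_ne_zero hr, mul_div_cancel₀ _ hr]

theorem sinc_pos_of_nonneg_of_lt_pi {r : ℝ} (h0 : 0 ≤ r) (hr : r < π) : 0 < sinc r := by
  rcases h0.eq_or_lt with rfl | h0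
  · simp
  · rw [sinc_of_ne_zero h0.ne']
    exact div_pos (sin_pos_of_pos_of_lt_pi h0 hr) h0

theorem hasSum_sinc (r : ℝ) :
    HasSum (fun n : ℕ => (-1) ^ n * r ^ (2 * n) / ((2 * n + 1)! : ℝ)) (sinc r) := by
  rcases eq_or_ne r 0 with rfl | hr
  · convert hasSum_ite_eq 0 (1 : ℝ) using 1
    · funext n
      cases n <;> simp
    · simp
  · rw [sinc_of_ne_zero hr]
    refine ((hasSum_sin r).div_const r).congr_fun fun n => ?_
    rw [pow_succ]
    field_simp

end Real

namespace NormedSpace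

variable {𝔸 : Type*} [Ring 𝔸] [Algebra ℝ 𝔸] [TopologicalSpace 𝔸] [IsTopologicalRing 𝔸]
  [ContinuousSMul ℝ 𝔸] [T2Space 𝔸]

theorem exp_eq_cos_smul_one_add_sinc_smul {x : 𝔸} {r : ℝ} (hx : x * x = -(r ^ 2) • 1) :
    exp x = Real.cos r • 1 + Real.sinc r • x := by
  have hpow (k : ℕ) : x ^ (2 * k) = ((-1) ^ k * r ^ (2 * k)) • 1 := by
    rw [pow_mul, sq, hx, smul_pow, one_pow]
    congr 1
    ring
  rw [exp_eq_tsum ℝ]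
  refine HasSum.tsum_eq (HasSum.even_add_odd ?_ ?_)
  · convert (Real.hasSum_cos r).smul_const (1 : 𝔸) using 2 with k
    rw [hpow, smul_smul, div_eq_inv_mul]
  · convert (Real.hasSum_sinc r).smul_const x using 2 with k
    rw [pow_succ, hpow, smul_one_mul, smul_smul, div_eq_inv_mul]

end NormedSpace

theorem Matrix.mul_self_fin_two {R : Type*} [CommRing R] (A : Matrix (Fin 2) (Fin 2) R) :
    A * A = A.trace • A - A.det • 1 := by
  ext i j
  fin_cases i <;> fin_cases j <;> simp [mul_apply, trace_fin_two, det_fin_two] <;> ring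

def su2 : Set (Matrix (Fin 2) (Fin 2) ℂ) := {θ | θ.trace = 0 ∧ θᴴ = -θ}

theorem su2Norm_of_mul_self_eq_neg_sq_smul_one {θ : Matrix (Fin 2) (Fin 2) ℂ} {r : ℝ}
    (hr : 0 ≤ r) (h : θ * θ = -(r ^ 2) • 1) : su2Norm θ = √2 * r := by
  have htr : -((-(r ^ 2) • 1 : Matrix (Fin 2) (Fin 2) ℂ).trace.re) = 2 * r ^ 2 := by
    simp [trace_smul, mul_comm, -Complex.ofReal_pow]
  rw [su2Norm, h, htr, Real.sqrt_mul zero_le_two, Real.sqrt_sq hr]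

theorem smul_one_add_mem_specialUnitaryGroup {θ : Matrix (Fin 2) (Fin 2) ℂ} (hθ : θ ∈ su2)
    {c s : ℝ} (hθθ : θ * θ = -(s ^ 2) • 1) (hcs : c ^ 2 + s ^ 2 = 1) :
    c • 1 + θ ∈ specialUnitaryGroup (Fin 2) ℂ := by
  rw [mem_specialUnitaryGroup_iff, mem_unitaryGroup_iff']
  constructor
  · rw [star_eq_conjTranspose, conjTranspose_add, hθ.2, conjTranspose_smul, star_trivial,
      conjTranspose_one]
    simp only [add_mul, mul_add, smul_mul_smul_comm, Matrix.one_mul, Matrix.mul_one, hθθ,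
      Matrix.neg_mul, Matrix.smul_mul, Matrix.mul_smul]
    calc _ = (c ^ 2 + s ^ 2) • (1 : Matrix (Fin 2) (Fin 2) ℂ) := by module
      _ = 1 := by rw [hcs, one_smul]
  · have h00 := congrFun (congrFun hθθ 0) 0
    have htr := hθ.1
    have hcs' : (c : ℂ) ^ 2 + (s : ℂ) ^ 2 = 1 := by exact_mod_cast hcs
    simp only [mul_apply, Fin.sum_univ_two, Matrix.smul_apply, one_apply_eq, neg_smul,
      Complex.real_smul, Complex.ofReal_pow, mul_one] at h00
    rw [trace_fin_two] at htr
    simp only [det_fin_two, Matrix.add_apply, Matrix.smul_apply, one_apply_eq, one_apply_ne,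
      Complex.real_smul, mul_one, ne_eq, zero_ne_one, one_ne_zero, not_false_eq_true, smul_zero,
      zero_add]
    linear_combination (↑c + θ 0 0) * htr - h00 + hcs'

theorem exists_smul_one_add_of_mem_specialUnitaryGroup {A : Matrix (Fin 2) (Fin 2) ℂ}
    (hA : A ∈ specialUnitaryGroup (Fin 2) ℂ) :
    ∃ (c : ℝ) (θ : Matrix (Fin 2) (Fin 2) ℂ), θ ∈ su2 ∧ θ * θ = (c ^ 2 - 1) • 1 ∧
      A = c • 1 + θ := by
  obtain ⟨hU, hdet⟩ := mem_specialUnitaryGroup_iff.mp hA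
  have hsq : A * A = A.trace • A - 1 := by rw [mul_self_fin_two, hdet, one_smul]
  -- Cayley–Hamilton with `det A = 1` exhibits `A.trace • 1 - A` as a right inverse of `A`.
  have hstar : Aᴴ = A.trace • 1 - A := by
    calc Aᴴ = Aᴴ * (A * (A.trace • 1 - A)) := by
          rw [Matrix.mul_sub, Matrix.mul_smul, Matrix.mul_one, hsq, sub_sub_cancel,
            Matrix.mul_one]
      _ = A.trace • 1 - A := by
          rw [← Matrix.mul_assoc, ← star_eq_conjTranspose, mem_unitaryGroup_iff'.mp hU,
            Matrix.one_mul]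
  obtain ⟨c, hc⟩ : ∃ c : ℝ, A.trace = ((2 * c : ℝ) : ℂ) := by
    have h := congrArg trace hstar
    rw [trace_conjTranspose, trace_sub, trace_smul, trace_one] at h
    have hreal : (A.trace.re : ℂ) = A.trace :=
      Complex.conj_eq_iff_re.mp (h.trans (by simp only [Fintype.card_fin, Nat.cast_ofNat, smul_eq_mul]; ring))
    exact ⟨A.trace.re / 2, by push_cast; rw [hreal]; ring⟩
  rw [hc, Complex.coe_smul] at hsq hstar
  refine ⟨c, A - c • 1, ⟨?_, ?_⟩, ?_, by abel⟩
  · rw [trace_sub, hc, trace_smul, trace_one]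
    simp only [Complex.ofReal_mul, Complex.ofReal_ofNat, Fintype.card_fin, Nat.cast_ofNat,
      Complex.real_smul]
    ring
  · rw [conjTranspose_sub, hstar, conjTranspose_smul, star_trivial, conjTranspose_one]
    module
  · simp only [sub_mul, mul_sub, Matrix.smul_mul, Matrix.mul_smul, Matrix.one_mul,
      Matrix.mul_one, smul_smul, hsq]
    module

namespace su2

variable {θ θ₁ θ₂ : Matrix (Fin 2) (Fin 2) ℂ}

theorem smul_mem (hθ : θ ∈ su2) (a : ℝ) : a • θ ∈ su2 :=
  ⟨by rw [trace_smul, hθ.1, smul_zero], by rw [conjTranspose_smul, hθ.2, star_trivial, smul_neg]⟩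

theorem conjTranspose_mul_self (hθ : θ ∈ su2) : θᴴ * θ = -(θ * θ) := by
  rw [hθ.2, Matrix.neg_mul]

theorem exists_mul_self_eq_neg_sq_smul_one (hθ : θ ∈ su2) :
    ∃ r : ℝ, 0 ≤ r ∧ θ * θ = -(r ^ 2) • 1 := by
  have hdet : θ * θ = -θ.det • 1 := by
    rw [mul_self_fin_two, hθ.1, zero_smul, zero_sub, neg_smul]
  obtain ⟨ρ, hρ0, hρ⟩ : ∃ ρ : ℝ, 0 ≤ ρ ∧ θ.det = ρ := by
    have h00 := congrFun (congrFun (conjTranspose_mul_self hθ) 0) 0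
    rw [hdet] at h00
    simp only [mul_apply, conjTranspose_apply, RCLike.star_def,
      ← Complex.normSq_eq_conj_mul_self, Fin.sum_univ_two, neg_smul, Matrix.neg_apply,
      Matrix.smul_apply, one_apply_eq, smul_eq_mul, mul_one, neg_neg] at h00
    exact ⟨Complex.normSq (θ 0 0) + Complex.normSq (θ 1 0),
      add_nonneg (Complex.normSq_nonneg _) (Complex.normSq_nonneg _), by push_cast; exact h00.symm⟩
  refine ⟨√ρ, Real.sqrt_nonneg _, ?_⟩
  rw [Real.sq_sqrt hρ0, hdet, hρ, ← Complex.ofReal_neg, Complex.coe_smul]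

theorem exists_mem_Ico_mul_self_eq_neg_sq_smul_one (hθ : θ ∈ su2) (hlt : su2Norm θ < π * √2) :
    ∃ r ∈ Set.Ico 0 π, θ * θ = -(r ^ 2) • 1 := by
  obtain ⟨r, hr, hθθ⟩ := exists_mul_self_eq_neg_sq_smul_one hθ
  refine ⟨r, ⟨hr, ?_⟩, hθθ⟩
  rw [su2Norm_of_mul_self_eq_neg_sq_smul_one hr hθθ, mul_comm] at hlt
  exact lt_of_mul_lt_mul_right hlt (Real.sqrt_nonneg 2)

theorem trace_exp {r : ℝ} (hθ : θ ∈ su2) (hθθ : θ * θ = -(r ^ 2) • 1) :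
    (NormedSpace.exp θ).trace = 2 * Real.cos r := by
  rw [NormedSpace.exp_eq_cos_smul_one_add_sinc_smul hθθ]
  simp [trace_smul, hθ.1, mul_comm]

theorem exp_mem_specialUnitaryGroup (hθ : θ ∈ su2) :
    NormedSpace.exp θ ∈ specialUnitaryGroup (Fin 2) ℂ := by
  obtain ⟨r, -, hθθ⟩ := exists_mul_self_eq_neg_sq_smul_one hθ
  rw [NormedSpace.exp_eq_cos_smul_one_add_sinc_smul hθθ]
  refine smul_one_add_mem_specialUnitaryGroup (smul_mem hθ _) ?_ (Real.cos_sq_add_sin_sq r)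
  rw [smul_mul_smul_comm, hθθ, smul_smul, ← Real.mul_sinc]
  congr 1
  ring

theorem exp_ne_neg_one (hθ : θ ∈ su2) (hlt : su2Norm θ < π * √2) :
    NormedSpace.exp θ ≠ -1 := by
  obtain ⟨r, hr, hθθ⟩ := exists_mem_Ico_mul_self_eq_neg_sq_smul_one hθ hlt
  intro h
  have hcos : Real.cos r = -1 := by
    have := congrArg trace h
    rw [trace_exp hθ hθθ, trace_neg, trace_one] at this
    have h2 : 2 * Real.cos r = -2 := by exact_mod_cast this
    linarith
  exact hr.2.ne (Real.injOn_cos ⟨hr.1, hr.2.le⟩ ⟨Real.pi_pos.le, le_rfl⟩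
    (hcos.trans Real.cos_pi.symm))

theorem eq_of_exp_eq (hθ₁ : θ₁ ∈ su2) (hθ₂ : θ₂ ∈ su2) (hlt₁ : su2Norm θ₁ < π * √2)
    (hlt₂ : su2Norm θ₂ < π * √2) (h : NormedSpace.exp θ₁ = NormedSpace.exp θ₂) : θ₁ = θ₂ := by
  obtain ⟨r₁, hr₁, h₁⟩ := exists_mem_Ico_mul_self_eq_neg_sq_smul_one hθ₁ hlt₁
  obtain ⟨r₂, hr₂, h₂⟩ := exists_mem_Ico_mul_self_eq_neg_sq_smul_one hθ₂ hlt₂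
  have hcos : Real.cos r₁ = Real.cos r₂ := by
    have := congrArg trace h
    rw [trace_exp hθ₁ h₁, trace_exp hθ₂ h₂] at this
    exact_mod_cast mul_left_cancel₀ two_ne_zero this
  obtain rfl : r₁ = r₂ := Real.injOn_cos ⟨hr₁.1, hr₁.2.le⟩ ⟨hr₂.1, hr₂.2.le⟩ hcos
  rw [NormedSpace.exp_eq_cos_smul_one_add_sinc_smul h₁,
    NormedSpace.exp_eq_cos_smul_one_add_sinc_smul h₂] at h
  exact smul_right_injective _ (Real.sinc_pos_of_nonneg_of_lt_pi hr₁.1 hr₁.2).ne'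
    (add_left_cancel h)

theorem exists_exp_eq {A : Matrix (Fin 2) (Fin 2) ℂ} (hA : A ∈ specialUnitaryGroup (Fin 2) ℂ)
    (hA₁ : A ≠ -1) : ∃ θ ∈ su2, su2Norm θ < π * √2 ∧ NormedSpace.exp θ = A := by
  obtain ⟨c, θ₀, hθ₀, hsq, rfl⟩ := exists_smul_one_add_of_mem_specialUnitaryGroup hA
  obtain ⟨ρ, hρ, hρsq⟩ := exists_mul_self_eq_neg_sq_smul_one hθ₀
  have hcρ : c ^ 2 + ρ ^ 2 = 1 := by
    have := smul_left_injective ℝ (one_ne_zero (α := Matrix (Fin 2) (Fin 2) ℂ))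
      (hsq.symm.trans hρsq)
    linarith
  have hc : -1 < c := by
    refine lt_of_le_of_ne (by nlinarith) fun hc => hA₁ ?_
    have hρ0 : ρ = 0 := by nlinarith
    have : θ₀ = 0 := conjTranspose_mul_self_eq_zero.mp (by
      rw [conjTranspose_mul_self hθ₀, hρsq, hρ0]; simp)
    rw [this, ← hc]
    simp
  set r := Real.arccos c
  have hr : r ∈ Set.Ico 0 π := ⟨Real.arccos_nonneg c, Real.arccos_lt_pi.mpr hc⟩
  have hsin : Real.sin r = ρ := by
    rw [Real.sin_arccos, ← Real.sqrt_sq hρ]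
    congr 1
    linarith
  have hsinc := Real.sinc_pos_of_nonneg_of_lt_pi hr.1 hr.2
  have hθθ : ((Real.sinc r)⁻¹ • θ₀) * ((Real.sinc r)⁻¹ • θ₀) = -(r ^ 2) • 1 := by
    rw [smul_mul_smul_comm, hρsq, smul_smul, ← hsin, ← Real.mul_sinc]
    congr 1
    field_simp
  refine ⟨(Real.sinc r)⁻¹ • θ₀, smul_mem hθ₀ _, ?_, ?_⟩
  · rw [su2Norm_of_mul_self_eq_neg_sq_smul_one hr.1 hθθ, mul_comm]
    exact mul_lt_mul_of_pos_right hr.2 (by positivity)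
  · rw [NormedSpace.exp_eq_cos_smul_one_add_sinc_smul hθθ,
      Real.cos_arccos (by linarith) (by nlinarith), smul_smul, mul_inv_cancel₀ hsinc.ne',
      one_smul]

end su2

/-- The matrix exponential restricts to a bijection from the open ball
`{θ ∈ su(2) : |θ| < π√2}` onto `SU(2) \ {-I}`. -/
theorem stmt_0 :
    Set.BijOn (NormedSpace.exp)
      {θ : Matrix (Fin 2) (Fin 2) ℂ | θ.trace = 0 ∧ θᴴ = -θ ∧
        su2Norm θ < Real.pi * Real.sqrt 2}
      {A : Matrix (Fin 2) (Fin 2) ℂ | A ∈ Matrix.specialUnitaryGroup (Fin 2) ℂ ∧ A ≠ -1} := by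
  refine ⟨?_, ?_, ?_⟩
  · rintro θ ⟨htr, hskew, hlt⟩
    exact ⟨su2.exp_mem_specialUnitaryGroup ⟨htr, hskew⟩, su2.exp_ne_neg_one ⟨htr, hskew⟩ hlt⟩
  · rintro θ₁ ⟨htr₁, hskew₁, hlt₁⟩ θ₂ ⟨htr₂, hskew₂, hlt₂⟩
    exact su2.eq_of_exp_eq ⟨htr₁, hskew₁⟩ ⟨htr₂, hskew₂⟩ hlt₁ hlt₂
  · rintro A ⟨hA, hA₁⟩
    obtain ⟨θ, ⟨htr, hskew⟩, hlt, rfl⟩ := su2.exists_exp_eq hA hA₁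
    exact ⟨θ, ⟨htr, hskew, hlt⟩, rfl⟩
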